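/- arXiv:1803.09562 — 3 statements merged into one kernel-verified Lean document; each statement's English description precedes it below -/
import Mathlib

section
/- Let 1 < p < 2. There exists a constant C_p > 0 such that for all a, b ∈ ℝ^N with |a| + |b| > 0: (max_{0 ≤ s ≤ 1} |a + s b|)^{p−2} ≤ ∫₀¹ |a + s b|^{p−2} ds ≤ C_p (max_{0 ≤ s ≤ 1} |a + s b|)^{p−2}. -/
/-!
Write `f s = ‖a + s • b‖` (in any real normed space), let `M = f t` be its maximum on `[0, 1]`
and `c` a minimum point, and put `r = p - 2 ∈ (-1, 0)`. The lower bound holds because `f ≤ M` and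
`f` vanishes at most at one point. For the upper bound, the triangle inequality gives
`M ≤ f s + ‖b‖` and `‖b‖ |s - c| ≤ f s + f c ≤ 2 f s`, hence `M |s - c| ≤ 3 f s` on `[0, 1]`.
Therefore `∫ f ^ r ≤ (M / 3) ^ r ∫ |s - c| ^ r ≤ 3 M ^ r · 2 / (r + 1)`.
-/

open MeasureTheory Set Real intervalIntegral

section AbsRpow

variable {r : ℝ}

theorem intervalIntegrable_abs_rpow (hr : -1 < r) (x y : ℝ) :
    IntervalIntegrable (fun u : ℝ => |u| ^ r) volume x y := by
  have of_nonneg : ∀ y, 0 ≤ y → IntervalIntegrable (fun u : ℝ => |u| ^ r) volume 0 y := by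
    intro y hy
    rw [intervalIntegrable_iff, uIoc_of_le hy]
    exact (intervalIntegrable_rpow' hr).1.congr_fun
      (fun u hu => by simp only [abs_of_pos hu.1]) measurableSet_Ioc
  have from_zero : ∀ y, IntervalIntegrable (fun u : ℝ => |u| ^ r) volume 0 y := by
    intro y
    rcases le_total 0 y with hy | hy
    · exact of_nonneg y hy
    · rw [IntervalIntegrable.iff_comp_neg]
      simpa using of_nonneg (-y) (neg_nonneg.2 hy)
  exact (from_zero x).symm.trans (from_zero y)

theorem intervalIntegrable_abs_sub_rpow (hr : -1 < r) (c x y : ℝ) :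
    IntervalIntegrable (fun s : ℝ => |s - c| ^ r) volume x y := by
  simpa using (intervalIntegrable_abs_rpow hr (x - c) (y - c)).comp_sub_right c

theorem integral_abs_rpow_of_nonneg (hr : -1 < r) {x : ℝ} (hx : 0 ≤ x) :
    ∫ u in 0..x, |u| ^ r = x ^ (r + 1) / (r + 1) := by
  rw [integral_congr (g := fun u => u ^ r) fun u hu => by
      rw [uIcc_of_le hx] at hu; simp only [abs_of_nonneg hu.1],
    integral_rpow (Or.inl hr), zero_rpow (by linarith), sub_zero]

theorem integral_neg_abs_rpow (x : ℝ) : ∫ u in -x..0, |u| ^ r = ∫ u in 0..x, |u| ^ r := by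
  simpa using (integral_comp_neg (a := 0) (b := x) fun u : ℝ => |u| ^ r).symm

theorem integral_abs_sub_rpow_le (hr : -1 < r) {c : ℝ} (hc : c ∈ Icc (0 : ℝ) 1) :
    ∫ s in 0..1, |s - c| ^ r ≤ 2 / (r + 1) := by
  have hr1 : 0 < r + 1 := by linarith
  have piece_le : ∀ x ∈ Icc (0 : ℝ) 1, x ^ (r + 1) / (r + 1) ≤ 1 / (r + 1) := fun x hx =>
    div_le_div_of_nonneg_right (rpow_le_one hx.1 hx.2 hr1.le) hr1.le
  rw [integral_comp_sub_right (fun u => |u| ^ r) c, zero_sub,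
    ← integral_add_adjacent_intervals (intervalIntegrable_abs_rpow hr _ 0)
      (intervalIntegrable_abs_rpow hr 0 _),
    integral_neg_abs_rpow, integral_abs_rpow_of_nonneg hr hc.1,
    integral_abs_rpow_of_nonneg hr (sub_nonneg.2 hc.2)]
  calc c ^ (r + 1) / (r + 1) + (1 - c) ^ (r + 1) / (r + 1)
      ≤ 1 / (r + 1) + 1 / (r + 1) :=
        add_le_add (piece_le c hc) (piece_le (1 - c) ⟨sub_nonneg.2 hc.2, by linarith [hc.1]⟩)
    _ = 2 / (r + 1) := by ring

theorem div_rpow_le_mul_rpow {x k : ℝ} (hx : 0 ≤ x) (hk : 1 ≤ k) (hr : -1 ≤ r) :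
    (x / k) ^ r ≤ k * x ^ r := by
  rw [div_rpow hx (by linarith), div_eq_mul_inv, ← rpow_neg (by linarith), mul_comm]
  gcongr
  exact (rpow_le_rpow_of_exponent_le hk (by linarith)).trans_eq (rpow_one k)

end AbsRpow

section Segment

variable {E : Type*} [NormedAddCommGroup E] [NormedSpace ℝ E] (a b : E) {r : ℝ}

theorem norm_add_smul_le_norm_add_smul_add (s t : ℝ) :
    ‖a + s • b‖ ≤ ‖a + t • b‖ + |s - t| * ‖b‖ := by
  calc ‖a + s • b‖ = ‖(a + t • b) + (s - t) • b‖ := by rw [sub_smul]; abel_nf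
    _ ≤ ‖a + t • b‖ + |s - t| * ‖b‖ := by rw [← Real.norm_eq_abs, ← norm_smul]; exact norm_add_le _ _

theorem abs_sub_mul_norm_le_norm_add_smul_add (s t : ℝ) :
    |s - t| * ‖b‖ ≤ ‖a + s • b‖ + ‖a + t • b‖ := by
  calc |s - t| * ‖b‖ = ‖(a + s • b) - (a + t • b)‖ := by
        rw [← Real.norm_eq_abs, ← norm_smul, sub_smul]; congr 1; abel
    _ ≤ ‖a + s • b‖ + ‖a + t • b‖ := norm_sub_le _ _

theorem norm_add_norm_le_three_mul {M : ℝ} (hM : ∀ s ∈ Icc (0 : ℝ) 1, ‖a + s • b‖ ≤ M) :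
    ‖a‖ + ‖b‖ ≤ 3 * M := by
  have h₀ := hM 0 ⟨le_rfl, zero_le_one⟩
  have h₁ := hM 1 ⟨zero_le_one, le_rfl⟩
  have := abs_sub_mul_norm_le_norm_add_smul_add a b 1 0
  simp only [zero_smul, add_zero, one_smul, sub_zero, abs_one, one_mul] at h₀ h₁ this
  linarith

theorem norm_add_smul_mul_abs_sub_le {s t c : ℝ} (hst : |s - t| ≤ 1) (hsc : |s - c| ≤ 1)
    (hc : ‖a + c • b‖ ≤ ‖a + s • b‖) :
    ‖a + t • b‖ * |s - c| ≤ 3 * ‖a + s • b‖ := by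
  have hlip := norm_add_smul_le_norm_add_smul_add a b t s
  have hsep := abs_sub_mul_norm_le_norm_add_smul_add a b s c
  rw [abs_sub_comm] at hlip
  have hB : |s - t| * ‖b‖ ≤ ‖b‖ := mul_le_of_le_one_left (norm_nonneg b) hst
  nlinarith [abs_nonneg (s - c), norm_nonneg (a + s • b), norm_nonneg b]

theorem ae_add_smul_ne_zero (hab : a ≠ 0 ∨ b ≠ 0) : ∀ᵐ s : ℝ, a + s • b ≠ 0 := by
  have hzero : {s : ℝ | a + s • b = 0}.Subsingleton := by
    intro s (hs : a + s • b = 0) t (ht : a + t • b = 0)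
    have hst : (s - t) • b = 0 := by
      rw [sub_smul, ← add_sub_add_left_eq_sub _ _ a, hs, ht, sub_zero]
    rcases smul_eq_zero.1 hst with h | hb
    · exact sub_eq_zero.1 h
    · simp [hb] at hs; simp [hs, hb] at hab
  simpa using measure_eq_zero_iff_ae_notMem.1 (hzero.measure_zero volume)

theorem norm_add_smul_rpow_le (hr0 : r ≤ 0) {s t c : ℝ} (ht : 0 < ‖a + t • b‖)
    (hst : |s - t| ≤ 1) (hsc : |s - c| ≤ 1) (hc : ‖a + c • b‖ ≤ ‖a + s • b‖) (hs : s ≠ c) :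
    ‖a + s • b‖ ^ r ≤ (‖a + t • b‖ / 3) ^ r * |s - c| ^ r := by
  have hpos : 0 < ‖a + t • b‖ / 3 * |s - c| := by
    have := abs_pos.2 (sub_ne_zero.2 hs)
    positivity
  rw [← mul_rpow (by positivity) (abs_nonneg _)]
  exact rpow_le_rpow_of_nonpos hpos
    (by linarith [norm_add_smul_mul_abs_sub_le a b hst hsc hc]) hr0

theorem rpow_le_integral_norm_add_smul_rpow (hr0 : r ≤ 0) (hab : a ≠ 0 ∨ b ≠ 0) {t : ℝ}
    (hint : IntervalIntegrable (fun s => ‖a + s • b‖ ^ r) volume 0 1)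
    (htmax : ∀ s ∈ Icc (0 : ℝ) 1, ‖a + s • b‖ ≤ ‖a + t • b‖) :
    ‖a + t • b‖ ^ r ≤ ∫ s in 0..1, ‖a + s • b‖ ^ r :=
  calc ‖a + t • b‖ ^ r = ∫ _ in (0 : ℝ)..1, ‖a + t • b‖ ^ r := by simp
    _ ≤ ∫ s in 0..1, ‖a + s • b‖ ^ r := by
      refine integral_mono_ae_restrict zero_le_one intervalIntegrable_const hint ?_
      filter_upwards [ae_restrict_mem measurableSet_Icc,
        ae_restrict_of_ae (ae_add_smul_ne_zero a b hab)] with s hs hs0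
      exact rpow_le_rpow_of_nonpos (norm_pos_iff.2 hs0) (htmax s hs) hr0

theorem rpow_le_integral_norm_add_smul_rpow_le (hr : -1 < r) (hr0 : r ≤ 0)
    (hab : 0 < ‖a‖ + ‖b‖) {t c : ℝ} (ht : t ∈ Icc (0 : ℝ) 1)
    (htmax : ∀ s ∈ Icc (0 : ℝ) 1, ‖a + s • b‖ ≤ ‖a + t • b‖) (hc : c ∈ Icc (0 : ℝ) 1)
    (hcmin : ∀ s ∈ Icc (0 : ℝ) 1, ‖a + c • b‖ ≤ ‖a + s • b‖) :
    ‖a + t • b‖ ^ r ≤ ∫ s in 0..1, ‖a + s • b‖ ^ r ∧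
      ∫ s in 0..1, ‖a + s • b‖ ^ r ≤ 6 / (r + 1) * ‖a + t • b‖ ^ r := by
  have hM : 0 < ‖a + t • b‖ := by linarith [norm_add_norm_le_three_mul a b htmax]
  have dist_le_one : ∀ {x y : ℝ}, x ∈ Icc (0 : ℝ) 1 → y ∈ Icc (0 : ℝ) 1 → |x - y| ≤ 1 :=
    fun hx hy => abs_sub_le_iff.2 ⟨by linarith [hx.2, hy.1], by linarith [hx.1, hy.2]⟩
  have hdom : ∀ s ∈ Icc (0 : ℝ) 1, s ≠ c →
      ‖a + s • b‖ ^ r ≤ (‖a + t • b‖ / 3) ^ r * |s - c| ^ r := fun s hs =>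
    norm_add_smul_rpow_le a b hr0 hM (dist_le_one hs ht) (dist_le_one hs hc) (hcmin s hs)
  have hbound : IntervalIntegrable (fun s => (‖a + t • b‖ / 3) ^ r * |s - c| ^ r) volume 0 1 :=
    (intervalIntegrable_abs_sub_rpow hr c 0 1).const_mul _
  have hint : IntervalIntegrable (fun s => ‖a + s • b‖ ^ r) volume 0 1 := by
    have hcont : Continuous fun s : ℝ => ‖a + s • b‖ := by fun_prop
    refine hbound.mono_fun' (hcont.measurable.pow_const r).aestronglyMeasurable ?_
    rw [uIoc_of_le zero_le_one]
    filter_upwards [ae_restrict_mem measurableSet_Ioc, ae_restrict_of_ae (Measure.ae_ne volume c)]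
      with s hs hsc
    rw [norm_of_nonneg (rpow_nonneg (norm_nonneg _) _)]
    exact hdom s (Ioc_subset_Icc_self hs) hsc
  have hab' : a ≠ 0 ∨ b ≠ 0 := by
    contrapose! hab
    simp [hab]
  constructor
  · exact rpow_le_integral_norm_add_smul_rpow a b hr0 hab' hint htmax
  · calc ∫ s in 0..1, ‖a + s • b‖ ^ r
        ≤ ∫ s in 0..1, (‖a + t • b‖ / 3) ^ r * |s - c| ^ r := by
          refine integral_mono_ae_restrict zero_le_one hint hbound ?_
          filter_upwards [ae_restrict_mem measurableSet_Icc,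
            ae_restrict_of_ae (Measure.ae_ne volume c)] with s hs hsc
          exact hdom s hs hsc
      _ = (‖a + t • b‖ / 3) ^ r * ∫ s in 0..1, |s - c| ^ r := integral_const_mul _ _
      _ ≤ 3 * ‖a + t • b‖ ^ r * (2 / (r + 1)) :=
          mul_le_mul (div_rpow_le_mul_rpow hM.le (by norm_num) hr.le)
            (integral_abs_sub_rpow_le hr hc)
            (integral_nonneg zero_le_one fun _ _ => by positivity) (by positivity)
      _ = 6 / (r + 1) * ‖a + t • b‖ ^ r := by ring

end Segment

theorem stmt8 (p : ℝ) (hp1 : 1 < p) (hp2 : p < 2) :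
    ∃ C : ℝ, 0 < C ∧ ∀ (N : ℕ) (a b : EuclideanSpace ℝ (Fin N)),
      0 < ‖a‖ + ‖b‖ →
      (sSup ((fun s : ℝ => ‖a + s • b‖) '' Set.Icc 0 1)) ^ (p - 2)
          ≤ (∫ s in (0:ℝ)..1, ‖a + s • b‖ ^ (p - 2)) ∧
      (∫ s in (0:ℝ)..1, ‖a + s • b‖ ^ (p - 2))
          ≤ C * (sSup ((fun s : ℝ => ‖a + s • b‖) '' Set.Icc 0 1)) ^ (p - 2) := by
  refine ⟨6 / (p - 2 + 1), div_pos (by norm_num) (by linarith), fun N a b hab => ?_⟩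
  have hf : Continuous fun s : ℝ => ‖a + s • b‖ := by fun_prop
  obtain ⟨t, ht, hsSup, htmax⟩ :=
    isCompact_Icc.exists_sSup_image_eq_and_ge (nonempty_Icc.2 zero_le_one) hf.continuousOn
  obtain ⟨c, hc, hcmin⟩ :=
    isCompact_Icc.exists_isMinOn (nonempty_Icc.2 zero_le_one) hf.continuousOn
  rw [hsSup]
  exact rpow_le_integral_norm_add_smul_rpow_le a b (by linarith) (by linarith) hab ht htmax hc
    (isMinOn_iff.1 hcmin)
end

section
/- Let N ≥ 1, p > 2, R > 0, T > 0, m ≥ p/(p−2), λ ∈ ℝ. Define w(x, t) = C (R² − |x|²)^m (T − t) on K_R × [0, T], where K_R = {x ∈ ℝ^N : |x| < R}. Then the functions (x,t) ↦ (R² − |x|²)^{m(p−2) − p} |x|^{p−2} (T − t)^{p−1} · (R² − |x|²)^m and (x,t) ↦ (R² − |x|²)^{m(p−2)} (T−t)^{p−1} appearing in the expression ∂_t w − Δ_p w − λ|w|^{p−2}w are uniformly bounded on K_R × [0, T]; consequently there exists C > 0 small enough so that ∂_t w − Δ_p w − λ |w|^{p−2} w ≤ 0 pointwise on K_R × (0,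 T). -/
set_option maxHeartbeats 1000000

theorem stmt12 (N : ℕ) (hN : 1 ≤ N) (p R T m lam : ℝ)
    (hp : 2 < p) (hR : 0 < R) (hT : 0 < T) (hm : p / (p - 2) ≤ m) :
    (∃ M : ℝ, ∀ (x : EuclideanSpace ℝ (Fin N)) (t : ℝ), ‖x‖ < R → t ∈ Set.Icc 0 T →
      |(R ^ 2 - ‖x‖ ^ 2) ^ (m * (p - 2) - p) * ‖x‖ ^ (p - 2) * (T - t) ^ (p - 1)
          * (R ^ 2 - ‖x‖ ^ 2) ^ m| ≤ M ∧
      |(R ^ 2 - ‖x‖ ^ 2) ^ (m * (p - 2)) * (T - t) ^ (p - 1)| ≤ M) ∧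
    (∃ C : ℝ, 0 < C ∧ ∀ (x : EuclideanSpace ℝ (Fin N)) (t : ℝ), ‖x‖ < R → t ∈ Set.Ioo 0 T →
      -C * (R ^ 2 - ‖x‖ ^ 2) ^ m *
        (1 - C ^ (p - 2) * (2 * m) ^ (p - 1) * ‖x‖ ^ (p - 2)
            * (R ^ 2 - ‖x‖ ^ 2) ^ (m * (p - 2) - p)
            * (R ^ 2 * (p + N - 2) - ((2 * m - 1) * (p - 1) + N - 1) * ‖x‖ ^ 2)
            * (T - t) ^ (p - 1)
          + lam * C ^ (p - 2) * (R ^ 2 - ‖x‖ ^ 2) ^ (m * (p - 2)) * (T - t) ^ (p - 1)) ≤ 0) := by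
  have hp2 : (0:ℝ) < p - 2 := by linarith
  have hp1 : (0:ℝ) ≤ p - 1 := by linarith
  have hmp : p ≤ m * (p - 2) := by
    have h := (div_le_iff₀ hp2).mp hm; linarith
  have he1 : 0 ≤ m * (p - 2) - p := by linarith
  have he2 : 0 ≤ m * (p - 2) := by linarith
  have hm0 : (0:ℝ) < m := by
    have : 0 < p / (p - 2) := div_pos (by linarith) hp2
    linarith
  have hR2 : (0:ℝ) < R ^ 2 := by positivity
  have h2m : (0:ℝ) ≤ 2 * m := by linarith
  have h2mp : (0:ℝ) ≤ (2 * m) ^ (p - 1) := Real.rpow_nonneg h2m _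
  constructor
  · refine ⟨(R^2) ^ (m*(p-2)-p) * R ^ (p-2) * T ^ (p-1) * (R^2) ^ m
      + (R^2) ^ (m*(p-2)) * T ^ (p-1), ?_⟩
    intro x t hx ht
    have hx0 : (0:ℝ) ≤ ‖x‖ := norm_nonneg x
    have hA : 0 < R ^ 2 - ‖x‖ ^ 2 := by nlinarith
    have hAle : R ^ 2 - ‖x‖ ^ 2 ≤ R ^ 2 := by nlinarith
    have ht1 : 0 ≤ T - t := by linarith [ht.2]
    have ht2 : T - t ≤ T := by linarith [ht.1]
    have hM2 : 0 ≤ (R^2) ^ (m*(p-2)) * T ^ (p-1) := by positivity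
    have hM1 : 0 ≤ (R^2) ^ (m*(p-2)-p) * R ^ (p-2) * T ^ (p-1) * (R^2) ^ m := by positivity
    constructor
    · rw [abs_of_nonneg (by positivity)]
      have hb : (R ^ 2 - ‖x‖ ^ 2) ^ (m * (p - 2) - p) * ‖x‖ ^ (p - 2) * (T - t) ^ (p - 1)
          * (R ^ 2 - ‖x‖ ^ 2) ^ m
          ≤ (R^2) ^ (m*(p-2)-p) * R ^ (p-2) * T ^ (p-1) * (R^2) ^ m := by
        gcongr <;> first | exact hA.le | exact hx0 | exact hx.le | linarith
      linarith
    · rw [abs_of_nonneg (by positivity)]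
      have hb : (R ^ 2 - ‖x‖ ^ 2) ^ (m * (p - 2)) * (T - t) ^ (p - 1)
          ≤ (R^2) ^ (m*(p-2)) * T ^ (p-1) := by
        gcongr <;> first | exact hA.le | linarith
      linarith
  · set Q : ℝ := R ^ 2 * |p + (N:ℝ) - 2| + |(2*m - 1) * (p - 1) + (N:ℝ) - 1| * R ^ 2 with hQdef
    have hQ0 : 0 ≤ Q := by positivity
    have hG1 : 0 ≤ (2*m) ^ (p-1) * R ^ (p-2) * (R^2) ^ (m*(p-2)-p) * Q := by
      have h1 : (0:ℝ) ≤ R ^ (p-2) := by positivity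
      have h2 : (0:ℝ) ≤ (R^2) ^ (m*(p-2)-p) := by positivity
      exact mul_nonneg (mul_nonneg (mul_nonneg h2mp h1) h2) hQ0
    have hG2 : 0 ≤ |lam| * (R^2) ^ (m*(p-2)) := by positivity
    set B : ℝ := ((2*m) ^ (p-1) * R ^ (p-2) * (R^2) ^ (m*(p-2)-p) * Q
      + |lam| * (R^2) ^ (m*(p-2))) * T ^ (p-1) + 1 with hBdef
    have hTp : (0:ℝ) ≤ T ^ (p-1) := by positivity
    have hB : 0 < B := by
      have : 0 ≤ ((2*m) ^ (p-1) * R ^ (p-2) * (R^2) ^ (m*(p-2)-p) * Q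
        + |lam| * (R^2) ^ (m*(p-2))) * T ^ (p-1) := mul_nonneg (by linarith) hTp
      rw [hBdef]; linarith
    refine ⟨B ^ (-(p-2)⁻¹), Real.rpow_pos_of_pos hB _, ?_⟩
    have hD : (B ^ (-(p-2)⁻¹)) ^ (p - 2) = B⁻¹ := by
      rw [← Real.rpow_mul hB.le]
      have : -(p-2)⁻¹ * (p - 2) = -1 := by field_simp
      rw [this, Real.rpow_neg_one]
    have hC : 0 < B ^ (-(p-2)⁻¹) := Real.rpow_pos_of_pos hB _
    have hBinv : 0 ≤ B⁻¹ := by positivity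
    intro x t hx ht
    have hx0 : (0:ℝ) ≤ ‖x‖ := norm_nonneg x
    have hx2' : ‖x‖ ^ 2 < R ^ 2 := by
      have := mul_self_lt_mul_self hx0 hx
      calc ‖x‖ ^ 2 = ‖x‖ * ‖x‖ := sq ‖x‖
        _ < R * R := this
        _ = R ^ 2 := (sq R).symm
    have hx2 : ‖x‖ ^ 2 ≤ R ^ 2 := hx2'.le
    have hA : 0 < R ^ 2 - ‖x‖ ^ 2 := sub_pos.mpr hx2'
    have hAle : R ^ 2 - ‖x‖ ^ 2 ≤ R ^ 2 := sub_le_self _ (sq_nonneg _)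
    have ht1 : 0 ≤ T - t := sub_nonneg.mpr ht.2.le
    have ht2 : T - t ≤ T := sub_le_self _ ht.1.le
    have hX0 : (0:ℝ) ≤ ‖x‖ ^ (p-2) := by positivity
    have hAe0 : (0:ℝ) ≤ (R ^ 2 - ‖x‖ ^ 2) ^ (m*(p-2)-p) := by positivity
    have hτ0 : (0:ℝ) ≤ (T - t) ^ (p-1) := by positivity
    have hP : |(R ^ 2 * (p + (N:ℝ) - 2) - ((2 * m - 1) * (p - 1) + (N:ℝ) - 1) * ‖x‖ ^ 2)| ≤ Q := by
      calc |(R ^ 2 * (p + (N:ℝ) - 2) - ((2 * m - 1) * (p - 1) + (N:ℝ) - 1) * ‖x‖ ^ 2)| ≤ |R ^ 2 * (p + (N:ℝ) - 2)| + |((2 * m - 1) * (p - 1) + (N:ℝ) - 1) * ‖x‖ ^ 2| :=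
            abs_sub _ _
        _ = R ^ 2 * |p + (N:ℝ) - 2| + |(2 * m - 1) * (p - 1) + (N:ℝ) - 1| * ‖x‖ ^ 2 := by
            rw [abs_mul, abs_mul, abs_of_nonneg hR2.le, abs_of_nonneg (by positivity : (0:ℝ) ≤ ‖x‖ ^ 2)]
        _ ≤ Q := by rw [hQdef]; gcongr
    rw [hD]
    -- bound term1
    have habs1 : |B⁻¹ * (2 * m) ^ (p - 1) * ‖x‖ ^ (p - 2)
            * (R ^ 2 - ‖x‖ ^ 2) ^ (m * (p - 2) - p) * (R ^ 2 * (p + (N:ℝ) - 2) - ((2 * m - 1) * (p - 1) + (N:ℝ) - 1) * ‖x‖ ^ 2) * (T - t) ^ (p - 1)|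
        = B⁻¹ * (2 * m) ^ (p - 1) * ‖x‖ ^ (p - 2)
            * (R ^ 2 - ‖x‖ ^ 2) ^ (m * (p - 2) - p) * |(R ^ 2 * (p + (N:ℝ) - 2) - ((2 * m - 1) * (p - 1) + (N:ℝ) - 1) * ‖x‖ ^ 2)| * (T - t) ^ (p - 1) := by
      rw [abs_mul, abs_mul, abs_mul, abs_mul, abs_mul, abs_of_nonneg hBinv,
        abs_of_nonneg h2mp, abs_of_nonneg hX0, abs_of_nonneg hAe0, abs_of_nonneg hτ0]
    have h1 : |B⁻¹ * (2 * m) ^ (p - 1) * ‖x‖ ^ (p - 2)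
            * (R ^ 2 - ‖x‖ ^ 2) ^ (m * (p - 2) - p) * (R ^ 2 * (p + (N:ℝ) - 2) - ((2 * m - 1) * (p - 1) + (N:ℝ) - 1) * ‖x‖ ^ 2) * (T - t) ^ (p - 1)|
        ≤ B⁻¹ * (2 * m) ^ (p - 1) * R ^ (p - 2) * (R ^ 2) ^ (m * (p - 2) - p) * Q * T ^ (p - 1) := by
      rw [habs1]
      gcongr <;> first | exact hA.le | exact hx0 | exact hx.le | linarith
    have habs2 : |lam * B⁻¹ * (R ^ 2 - ‖x‖ ^ 2) ^ (m * (p - 2)) * (T - t) ^ (p - 1)|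
        = |lam| * B⁻¹ * (R ^ 2 - ‖x‖ ^ 2) ^ (m * (p - 2)) * (T - t) ^ (p - 1) := by
      rw [abs_mul, abs_mul, abs_mul, abs_of_nonneg hBinv,
        abs_of_nonneg (by positivity : (0:ℝ) ≤ (R ^ 2 - ‖x‖ ^ 2) ^ (m * (p - 2))),
        abs_of_nonneg hτ0]
    have h2 : |lam * B⁻¹ * (R ^ 2 - ‖x‖ ^ 2) ^ (m * (p - 2)) * (T - t) ^ (p - 1)|
        ≤ |lam| * B⁻¹ * (R ^ 2) ^ (m * (p - 2)) * T ^ (p - 1) := by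
      rw [habs2]
      gcongr <;> first | exact hA.le | linarith
    have hsum : B⁻¹ * (2 * m) ^ (p - 1) * R ^ (p - 2) * (R ^ 2) ^ (m * (p - 2) - p) * Q * T ^ (p - 1)
        + |lam| * B⁻¹ * (R ^ 2) ^ (m * (p - 2)) * T ^ (p - 1)
        = B⁻¹ * (B - 1) := by
      rw [hBdef]; ring
    have hfin : B⁻¹ * (B - 1) ≤ 1 := by
      have hmul : B⁻¹ * B = 1 := inv_mul_cancel₀ hB.ne'
      calc B⁻¹ * (B - 1) = B⁻¹ * B - B⁻¹ * 1 := mul_sub _ _ _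
        _ = 1 - B⁻¹ := by rw [hmul, mul_one]
        _ ≤ 1 := by linarith
    have hBr : 0 ≤ 1 - B⁻¹ * (2 * m) ^ (p - 1) * ‖x‖ ^ (p - 2)
            * (R ^ 2 - ‖x‖ ^ 2) ^ (m * (p - 2) - p) * (R ^ 2 * (p + (N:ℝ) - 2) - ((2 * m - 1) * (p - 1) + (N:ℝ) - 1) * ‖x‖ ^ 2) * (T - t) ^ (p - 1)
          + lam * B⁻¹ * (R ^ 2 - ‖x‖ ^ 2) ^ (m * (p - 2)) * (T - t) ^ (p - 1) := by
      have l1 := le_abs_self (B⁻¹ * (2 * m) ^ (p - 1) * ‖x‖ ^ (p - 2)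
            * (R ^ 2 - ‖x‖ ^ 2) ^ (m * (p - 2) - p) * (R ^ 2 * (p + (N:ℝ) - 2) - ((2 * m - 1) * (p - 1) + (N:ℝ) - 1) * ‖x‖ ^ 2) * (T - t) ^ (p - 1))
      have l2 := neg_abs_le (lam * B⁻¹ * (R ^ 2 - ‖x‖ ^ 2) ^ (m * (p - 2)) * (T - t) ^ (p - 1))
      linarith
    have hneg : -(B ^ (-(p-2)⁻¹)) * (R ^ 2 - ‖x‖ ^ 2) ^ m ≤ 0 := by
      rw [neg_mul]
      exact neg_nonpos.mpr (mul_pos hC (Real.rpow_pos_of_pos hA _)).le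
    exact mul_nonpos_iff.mpr (Or.inr ⟨hneg, hBr⟩)
end

section
/- Let Ω ⊂ ℝ^N be a bounded domain, 1 < p < 2, λ ≤ λ₁, h ∈ L^∞(Ω) with h ≥ 0 a.e., and let w ∈ W₀^{1,p}(Ω) ∩ L²(Ω) be a weak solution of −Δ_p w = λ|w|^{p−2}w − w + h(x) in Ω with zero Dirichlet boundary conditions. Then w ≥ 0 a.e. in Ω. -/
open MeasureTheory
open scoped RealInnerProductSpace

theorem stmt14 {α : Type*} [MeasurableSpace α] (μ : Measure α) (N : ℕ)
    (p lam lam1 : ℝ) (hp1 : 1 < p) (hp2 : p < 2) (hlam : lam ≤ lam1)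
    (X : Set (α → ℝ))
    (G : (α → ℝ) → α → EuclideanSpace ℝ (Fin N))
    (hlam1 : ∀ u ∈ X, lam1 * ∫ x, |u x| ^ p ∂μ ≤ ∫ x, ‖G u x‖ ^ p ∂μ)
    (h w : α → ℝ) (hw : w ∈ X) (hh : 0 ≤ᵐ[μ] h)
    (hneg : (fun x => max (-w x) 0) ∈ X)
    (hchain : ∀ᵐ x ∂μ, G (fun y => max (-w y) 0) x = if w x < 0 then -(G w x) else 0)
    (hint : ∀ u ∈ X, ∀ φ ∈ X,
      Integrable (fun x => ‖G u x‖ ^ (p - 2) * ⟪G u x, G φ x⟫) μ ∧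
      Integrable (fun x => |u x| ^ (p - 2) * u x * φ x) μ ∧
      Integrable (fun x => u x * φ x) μ ∧
      Integrable (fun x => h x * φ x) μ ∧
      Integrable (fun x => |u x| ^ p) μ ∧
      Integrable (fun x => ‖G u x‖ ^ p) μ)
    (hweak : ∀ φ ∈ X,
      ∫ x, ‖G w x‖ ^ (p - 2) * ⟪G w x, G φ x⟫ ∂μ
        = lam * ∫ x, |w x| ^ (p - 2) * w x * φ x ∂μ
          - ∫ x, w x * φ x ∂μ + ∫ x, h x * φ x ∂μ) :
    0 ≤ᵐ[μ] w := by
  set v : α → ℝ := fun x => max (-w x) 0 with hv_def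
  have hp0 : p ≠ 0 := by linarith
  have hp2' : p - 2 ≠ 0 := by intro hc; linarith [sub_eq_zero.mp hc]
  have hv_nonneg : ∀ x, 0 ≤ v x := fun x => le_max_right _ _
  -- a.e. equality for the gradient term
  have E1 : ∀ᵐ x ∂μ, ‖G w x‖ ^ (p - 2) * ⟪G w x, G v x⟫
      = -(‖G v x‖ ^ p) := by
    filter_upwards [hchain] with x hx
    by_cases hwx : w x < 0
    · rw [hx, if_pos hwx, inner_neg_right, real_inner_self_eq_norm_sq, norm_neg]
      by_cases h0 : ‖G w x‖ = 0
      · simp [h0, Real.zero_rpow hp2', Real.zero_rpow hp0]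
      · have hpos : 0 < ‖G w x‖ := lt_of_le_of_ne (norm_nonneg _) (Ne.symm h0)
        rw [mul_neg, ← Real.rpow_natCast (‖G w x‖) 2, ← Real.rpow_add hpos]
        norm_num
    · rw [hx, if_neg hwx]
      simp [Real.zero_rpow hp0]
  have E2 : ∀ x, |w x| ^ (p - 2) * w x * v x = -(|v x| ^ p) := by
    intro x
    by_cases hwx : w x < 0
    · have hv : v x = -w x := max_eq_left (by linarith)
      have habs : |w x| = -w x := abs_of_neg hwx
      have hpos : 0 < |w x| := abs_pos.mpr (ne_of_lt hwx)
      have habs2 : |v x| = |w x| := by rw [hv, abs_neg]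
      rw [habs2, hv]
      have : w x * -w x = -(|w x| ^ (2 : ℕ)) := by
        rw [sq_abs]; ring
      rw [mul_assoc, this, mul_neg, ← Real.rpow_natCast (|w x|) 2,
        ← Real.rpow_add hpos]
      norm_num
    · have hv : v x = 0 := max_eq_right (by linarith)
      rw [hv, mul_zero, abs_zero, Real.zero_rpow hp0, neg_zero]
  have E3 : ∀ x, w x * v x = -(v x * v x) := by
    intro x
    by_cases hwx : w x < 0
    · have hv : v x = -w x := max_eq_left (by linarith)
      rw [hv]; ring
    · have hv : v x = 0 := max_eq_right (by linarith)
      rw [hv]; ring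
  -- rewrite the weak formulation
  have key := hweak v hneg
  have hA : ∫ x, ‖G w x‖ ^ (p - 2) * ⟪G w x, G v x⟫ ∂μ
      = -∫ x, ‖G v x‖ ^ p ∂μ := by
    rw [integral_congr_ae E1, integral_neg]
  have hB : ∫ x, |w x| ^ (p - 2) * w x * v x ∂μ = -∫ x, |v x| ^ p ∂μ := by
    rw [integral_congr_ae (Filter.Eventually.of_forall E2), integral_neg]
  have hC : ∫ x, w x * v x ∂μ = -∫ x, v x * v x ∂μ := by
    rw [integral_congr_ae (Filter.Eventually.of_forall E3), integral_neg]
  rw [hA, hB, hC] at key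
  -- sign facts
  have hD : 0 ≤ ∫ x, h x * v x ∂μ := by
    apply integral_nonneg_of_ae
    filter_upwards [hh] with x hx
    exact mul_nonneg hx (hv_nonneg x)
  have hP : 0 ≤ ∫ x, |v x| ^ p ∂μ := by
    apply integral_nonneg
    intro x
    exact Real.rpow_nonneg (abs_nonneg _) p
  have hE : lam1 * ∫ x, |v x| ^ p ∂μ ≤ ∫ x, ‖G v x‖ ^ p ∂μ := hlam1 v hneg
  have hmul : lam * ∫ x, |v x| ^ p ∂μ ≤ lam1 * ∫ x, |v x| ^ p ∂μ :=
    mul_le_mul_of_nonneg_right hlam hP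
  have hle : ∫ x, v x * v x ∂μ ≤ 0 := by linarith
  have hge : 0 ≤ ∫ x, v x * v x ∂μ :=
    integral_nonneg (fun x => mul_nonneg (hv_nonneg x) (hv_nonneg x))
  have hzero : ∫ x, v x * v x ∂μ = 0 := le_antisymm hle hge
  have hIvv : Integrable (fun x => v x * v x) μ := (hint v hneg v hneg).2.2.1
  have hae : (fun x => v x * v x) =ᵐ[μ] 0 := by
    rw [← integral_eq_zero_iff_of_nonneg
      (fun x => mul_nonneg (hv_nonneg x) (hv_nonneg x)) hIvv]
    exact hzero
  filter_upwards [hae] with x hx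
  have hx' : v x * v x = 0 := hx
  have hvx : v x = 0 := mul_self_eq_zero.mp hx'
  have hle' : -w x ≤ 0 := hvx ▸ le_max_left (-w x) 0
  show (0 : ℝ) ≤ w x
  linarith
end
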